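/- Let X be a complex Banach space, θ₀ ∈ (0, π/2), κ > 0 and α ∈ (0,1). Let R⁺, R⁻ : (0,∞) → L(X) be strongly measurable operator-valued functions such that for every ρ > 0 one has ‖R^±(ρ)‖ ≤ κ/ρ, and for every ρ ∈ (0, 1/(2κ)] one has ‖R^±(ρ)‖ ≤ 2^α κ^α ρ^{α−1}. Then for every z ∈ ℂ with −α < Re z < 0: (a) the functions ρ ↦ (ρ e^{−iθ₀})^z • R⁺(ρ) and ρ ↦ (ρ e^{iθ₀})^z • R⁻(ρ) are Bochner integrable on (0,∞); and (b) the operator P(z) := (1/(2πi)) · ( e^{i(π−θ₀)} ∫₀^∞ (ρ e^{−iθ₀})^z R⁺(ρ) dρ − e^{−i(π−θ₀)} ∫₀^∞ (ρ e^{iθ₀})^z R⁻(ρ) dρ ) satisfies ‖P(z)‖ ≤ (e^{|Im z| θ₀}/π) · ( 2^α κ^α (2κ)^{−(α+Re z)}/(α + Re z) + κ (2κ)^{−Re z}/(−Re z) ). -/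

import Mathlib

/-!
On the ray `arg w = θ` with `|θ| ≤ θ₀ < π` one has `‖w ^ z‖ ≤ e ^ (|Im z| θ₀) ‖w‖ ^ (Re z)`.
Splitting `(0, ∞)` at `1 / (2κ)`, the two resolvent bounds dominate the integrand by a multiple of
`ρ ^ (α + Re z - 1)` near `0` and of `ρ ^ (Re z - 1)` near `∞`; both majorants are integrable
exactly because `-α < Re z < 0`, and integrating them gives the bound for each ray. The two rays
and the prefactor `1 / (2π)` then produce the factor `1 / π`.
-/

open MeasureTheory Set

namespace Complex

lemma arg_ofReal_mul_exp_mul_I {ρ θ : ℝ} (hρ : 0 < ρ) (hθ : θ ∈ Ioc (-Real.pi) Real.pi) :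
    arg (ρ * exp (θ * I)) = θ := by
  rw [arg_real_mul _ hρ, arg_exp_mul_I, toIocMod_eq_self]
  exact ⟨hθ.1, by linarith [hθ.2]⟩

lemma norm_ofReal_mul_exp_mul_I_cpow_le {ρ θ : ℝ} (hρ : 0 < ρ) (hθ : θ ∈ Ioc (-Real.pi) Real.pi)
    (z : ℂ) : ‖((ρ : ℂ) * exp (θ * I)) ^ z‖ ≤ Real.exp (|z.im| * |θ|) * ρ ^ z.re := by
  have hnorm : ‖(ρ : ℂ) * exp (θ * I)‖ = ρ := by
    rw [norm_mul, norm_real, Real.norm_of_nonneg hρ.le, norm_exp_ofReal_mul_I, mul_one]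
  refine (norm_cpow_le _ _).trans ?_
  rw [hnorm, arg_ofReal_mul_exp_mul_I hρ hθ, div_eq_mul_inv, ← Real.exp_neg, mul_comm]
  gcongr
  calc -(θ * z.im) ≤ |θ * z.im| := neg_le_abs _
    _ = |z.im| * |θ| := by rw [abs_mul, mul_comm]

lemma continuousOn_ofReal_mul_exp_mul_I_cpow {θ : ℝ} (hθ : |θ| < Real.pi) (z : ℂ) :
    ContinuousOn (fun ρ : ℝ => ((ρ : ℂ) * exp (θ * I)) ^ z) (Ioi 0) := by
  intro ρ hρ
  have hθ' : θ ∈ Ioc (-Real.pi) Real.pi := ⟨(abs_lt.mp hθ).1, (abs_lt.mp hθ).2.le⟩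
  have hslit : (ρ : ℂ) * exp (θ * I) ∈ slitPlane := by
    rw [mem_slitPlane_iff_arg, arg_ofReal_mul_exp_mul_I hρ hθ']
    exact ⟨(abs_lt.mp hθ).2.ne, mul_ne_zero (ofReal_ne_zero.mpr (ne_of_gt hρ)) (exp_ne_zero _)⟩
  exact ((continuous_ofReal.mul continuous_const).continuousAt.cpow continuousAt_const
    hslit).continuousWithinAt

end Complex

lemma integrableOn_Ioc_zero_rpow_sub_one {a : ℝ} (ha : 0 < a) (c : ℝ) :
    IntegrableOn (fun ρ : ℝ => ρ ^ (a - 1)) (Ioc 0 c) := by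
  rcases le_total c 0 with hc | hc
  · simp [Ioc_eq_empty_of_le hc]
  rw [← intervalIntegrable_iff_integrableOn_Ioc_of_le hc]
  exact intervalIntegral.intervalIntegrable_rpow' (by linarith)

lemma integral_Ioc_zero_rpow_sub_one {a c : ℝ} (ha : 0 < a) (hc : 0 ≤ c) :
    ∫ ρ in Ioc 0 c, ρ ^ (a - 1) = c ^ a / a := by
  rw [← intervalIntegral.integral_of_le hc, integral_rpow (Or.inl (by linarith)), sub_add_cancel,
    Real.zero_rpow ha.ne', sub_zero]

lemma integral_Ioi_rpow_sub_one {b c : ℝ} (hb : b < 0) (hc : 0 < c) :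
    ∫ ρ in Ioi c, ρ ^ (b - 1) = c ^ b / (-b) := by
  rw [integral_Ioi_rpow_of_lt (by linarith) hc, sub_add_cancel, div_neg, neg_div]

section PowerBounds

variable {E : Type*} [NormedAddCommGroup E] {f : ℝ → E} {a b c A B : ℝ}

lemma integrableOn_Ioi_zero_of_norm_le_rpow (hf : AEStronglyMeasurable f (volume.restrict (Ioi 0)))
    (hc : 0 < c) (ha : 0 < a) (hb : b < 0)
    (h₀ : ∀ ρ ∈ Ioc 0 c, ‖f ρ‖ ≤ A * ρ ^ (a - 1)) (h₁ : ∀ ρ ∈ Ioi c, ‖f ρ‖ ≤ B * ρ ^ (b - 1)) :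
    IntegrableOn f (Ioi 0) := by
  rw [← Ioc_union_Ioi_eq_Ioi hc.le]
  refine IntegrableOn.union ?_ ?_
  · refine ((integrableOn_Ioc_zero_rpow_sub_one ha c).const_mul A).mono'
      (hf.mono_set Ioc_subset_Ioi_self) ?_
    filter_upwards [ae_restrict_mem measurableSet_Ioc] using h₀
  · refine ((integrableOn_Ioi_rpow_of_lt (by linarith : b - 1 < -1) hc).const_mul B).mono'
      (hf.mono_set (Ioi_subset_Ioi hc.le)) ?_
    filter_upwards [ae_restrict_mem measurableSet_Ioi] using h₁

lemma norm_integral_Ioi_zero_le_of_norm_le_rpow [NormedSpace ℝ E]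
    (hf : AEStronglyMeasurable f (volume.restrict (Ioi 0))) (hc : 0 < c) (ha : 0 < a) (hb : b < 0)
    (h₀ : ∀ ρ ∈ Ioc 0 c, ‖f ρ‖ ≤ A * ρ ^ (a - 1)) (h₁ : ∀ ρ ∈ Ioi c, ‖f ρ‖ ≤ B * ρ ^ (b - 1)) :
    ‖∫ ρ in Ioi 0, f ρ‖ ≤ A * c ^ a / a + B * c ^ b / (-b) := by
  have hf' : IntegrableOn (fun ρ => ‖f ρ‖) (Ioi 0) :=
    (integrableOn_Ioi_zero_of_norm_le_rpow hf hc ha hb h₀ h₁).norm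
  have hf₀ : IntegrableOn (fun ρ => ‖f ρ‖) (Ioc 0 c) := hf'.mono_set Ioc_subset_Ioi_self
  have hf₁ : IntegrableOn (fun ρ => ‖f ρ‖) (Ioi c) := hf'.mono_set (Ioi_subset_Ioi hc.le)
  calc ‖∫ ρ in Ioi 0, f ρ‖ ≤ ∫ ρ in Ioi 0, ‖f ρ‖ := norm_integral_le_integral_norm _
    _ = (∫ ρ in Ioc 0 c, ‖f ρ‖) + ∫ ρ in Ioi c, ‖f ρ‖ := by
        rw [← Ioc_union_Ioi_eq_Ioi hc.le,
          setIntegral_union (Ioc_disjoint_Ioi le_rfl) measurableSet_Ioi hf₀ hf₁]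
    _ ≤ (∫ ρ in Ioc 0 c, A * ρ ^ (a - 1)) + ∫ ρ in Ioi c, B * ρ ^ (b - 1) := by
        refine add_le_add ?_ ?_
        · exact setIntegral_mono_on hf₀ ((integrableOn_Ioc_zero_rpow_sub_one ha c).const_mul A)
            measurableSet_Ioc h₀
        · exact setIntegral_mono_on hf₁
            ((integrableOn_Ioi_rpow_of_lt (by linarith : b - 1 < -1) hc).const_mul B)
            measurableSet_Ioi h₁
    _ = A * c ^ a / a + B * c ^ b / (-b) := by
        rw [integral_const_mul, integral_const_mul, integral_Ioc_zero_rpow_sub_one ha hc.le,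
          integral_Ioi_rpow_sub_one hb hc, mul_div_assoc, mul_div_assoc]

end PowerBounds

section Ray

variable {E : Type*} [NormedAddCommGroup E] [NormedSpace ℂ E] {R : ℝ → E} {θ c κ M α : ℝ} {z : ℂ}

lemma norm_ofReal_mul_exp_mul_I_cpow_smul_le {ρ : ℝ} (hρ : 0 < ρ) (hθ : |θ| < Real.pi) :
    ‖((ρ : ℂ) * Complex.exp (θ * Complex.I)) ^ z • R ρ‖ ≤
      Real.exp (|z.im| * |θ|) * ρ ^ z.re * ‖R ρ‖ := by
  rw [norm_smul]
  gcongr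
  exact Complex.norm_ofReal_mul_exp_mul_I_cpow_le hρ
    ⟨(abs_lt.mp hθ).1, (abs_lt.mp hθ).2.le⟩ z

lemma aestronglyMeasurable_ofReal_mul_exp_mul_I_cpow_smul
    (hR : AEStronglyMeasurable R (volume.restrict (Ioi 0))) (hθ : |θ| < Real.pi) :
    AEStronglyMeasurable (fun ρ : ℝ => ((ρ : ℂ) * Complex.exp (θ * Complex.I)) ^ z • R ρ)
      (volume.restrict (Ioi 0)) :=
  ((Complex.continuousOn_ofReal_mul_exp_mul_I_cpow hθ z).aestronglyMeasurable
    measurableSet_Ioi).smul hR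

lemma norm_ofReal_mul_exp_mul_I_cpow_smul_le_of_le_rpow (hθ : |θ| < Real.pi)
    (hR₀ : ∀ ρ, 0 < ρ → ρ ≤ c → ‖R ρ‖ ≤ M * ρ ^ (α - 1)) :
    ∀ ρ ∈ Ioc 0 c, ‖((ρ : ℂ) * Complex.exp (θ * Complex.I)) ^ z • R ρ‖ ≤
      Real.exp (|z.im| * |θ|) * M * ρ ^ (α + z.re - 1) := by
  rintro ρ ⟨hρ, hρc⟩
  calc _ ≤ Real.exp (|z.im| * |θ|) * ρ ^ z.re * ‖R ρ‖ :=
        norm_ofReal_mul_exp_mul_I_cpow_smul_le hρ hθ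
    _ ≤ Real.exp (|z.im| * |θ|) * ρ ^ z.re * (M * ρ ^ (α - 1)) := by
        gcongr
        exact hR₀ ρ hρ hρc
    _ = Real.exp (|z.im| * |θ|) * M * ρ ^ (α + z.re - 1) := by
        rw [show α + z.re - 1 = z.re + (α - 1) by ring, Real.rpow_add hρ]
        ring

lemma norm_ofReal_mul_exp_mul_I_cpow_smul_le_of_le_div (hθ : |θ| < Real.pi) (hc : 0 < c)
    (hR₁ : ∀ ρ, c < ρ → ‖R ρ‖ ≤ κ / ρ) :
    ∀ ρ ∈ Ioi c, ‖((ρ : ℂ) * Complex.exp (θ * Complex.I)) ^ z • R ρ‖ ≤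
      Real.exp (|z.im| * |θ|) * κ * ρ ^ (z.re - 1) := by
  intro ρ hρc
  have hρ : 0 < ρ := hc.trans hρc
  calc _ ≤ Real.exp (|z.im| * |θ|) * ρ ^ z.re * ‖R ρ‖ :=
        norm_ofReal_mul_exp_mul_I_cpow_smul_le hρ hθ
    _ ≤ Real.exp (|z.im| * |θ|) * ρ ^ z.re * (κ / ρ) := by
        gcongr
        exact hR₁ ρ hρc
    _ = Real.exp (|z.im| * |θ|) * κ * ρ ^ (z.re - 1) := by
        rw [Real.rpow_sub_one hρ.ne']
        ring

lemma integrableOn_ofReal_mul_exp_mul_I_cpow_smul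
    (hR : AEStronglyMeasurable R (volume.restrict (Ioi 0))) (hθ : |θ| < Real.pi) (hc : 0 < c)
    (hz₁ : -α < z.re) (hz₂ : z.re < 0)
    (hR₀ : ∀ ρ, 0 < ρ → ρ ≤ c → ‖R ρ‖ ≤ M * ρ ^ (α - 1)) (hR₁ : ∀ ρ, c < ρ → ‖R ρ‖ ≤ κ / ρ) :
    IntegrableOn (fun ρ : ℝ => ((ρ : ℂ) * Complex.exp (θ * Complex.I)) ^ z • R ρ) (Ioi 0) :=
  integrableOn_Ioi_zero_of_norm_le_rpow (aestronglyMeasurable_ofReal_mul_exp_mul_I_cpow_smul hR hθ)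
    hc (by linarith) hz₂ (norm_ofReal_mul_exp_mul_I_cpow_smul_le_of_le_rpow hθ hR₀)
    (norm_ofReal_mul_exp_mul_I_cpow_smul_le_of_le_div hθ hc hR₁)

lemma norm_integral_ofReal_mul_exp_mul_I_cpow_smul_le
    (hR : AEStronglyMeasurable R (volume.restrict (Ioi 0))) (hθ : |θ| < Real.pi) (hc : 0 < c)
    (hz₁ : -α < z.re) (hz₂ : z.re < 0)
    (hR₀ : ∀ ρ, 0 < ρ → ρ ≤ c → ‖R ρ‖ ≤ M * ρ ^ (α - 1)) (hR₁ : ∀ ρ, c < ρ → ‖R ρ‖ ≤ κ / ρ) :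
    ‖∫ ρ in Ioi (0 : ℝ), ((ρ : ℂ) * Complex.exp (θ * Complex.I)) ^ z • R ρ‖ ≤
      Real.exp (|z.im| * |θ|) *
        (M * c ^ (α + z.re) / (α + z.re) + κ * c ^ z.re / (-z.re)) := by
  refine (norm_integral_Ioi_zero_le_of_norm_le_rpow
    (aestronglyMeasurable_ofReal_mul_exp_mul_I_cpow_smul hR hθ) hc (by linarith) hz₂
    (norm_ofReal_mul_exp_mul_I_cpow_smul_le_of_le_rpow hθ hR₀)
    (norm_ofReal_mul_exp_mul_I_cpow_smul_le_of_le_div hθ hc hR₁)).trans_eq ?_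
  ring

end Ray

lemma norm_smul_sub_smul_le {E : Type*} [NormedAddCommGroup E] [NormedSpace ℂ E] {u v : ℂ}
    (hu : ‖u‖ = 1) (hv : ‖v‖ = 1) (w : ℂ) (x y : E) :
    ‖w • (u • x - v • y)‖ ≤ ‖w‖ * (‖x‖ + ‖y‖) := by
  rw [norm_smul]
  gcongr
  refine (norm_sub_le _ _).trans_eq ?_
  rw [norm_smul, norm_smul, hu, hv, one_mul, one_mul]

theorem stmt_5_general {X : Type*} [NormedAddCommGroup X] [NormedSpace ℂ X] [CompleteSpace X]
    (θ₀ κ α : ℝ) (hθ₀ : θ₀ ∈ Set.Ioo 0 (Real.pi / 2)) (hκ : 0 < κ)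
    (Rp Rm : ℝ → X →L[ℂ] X)
    (hRpMeas : AEStronglyMeasurable Rp (volume.restrict (Set.Ioi (0 : ℝ))))
    (hRmMeas : AEStronglyMeasurable Rm (volume.restrict (Set.Ioi (0 : ℝ))))
    (hRp₁ : ∀ ρ : ℝ, 0 < ρ → ‖Rp ρ‖ ≤ κ / ρ)
    (hRm₁ : ∀ ρ : ℝ, 0 < ρ → ‖Rm ρ‖ ≤ κ / ρ)
    (hRp₂ : ∀ ρ : ℝ, 0 < ρ → ρ ≤ 1 / (2 * κ) → ‖Rp ρ‖ ≤ 2 ^ α * κ ^ α * ρ ^ (α - 1))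
    (hRm₂ : ∀ ρ : ℝ, 0 < ρ → ρ ≤ 1 / (2 * κ) → ‖Rm ρ‖ ≤ 2 ^ α * κ ^ α * ρ ^ (α - 1))
    (z : ℂ) (hz₁ : -α < z.re) (hz₂ : z.re < 0) :
    MeasureTheory.IntegrableOn
      (fun ρ : ℝ => (((ρ : ℂ) * Complex.exp (-(θ₀ : ℂ) * Complex.I)) ^ z) • Rp ρ)
      (Set.Ioi 0) volume ∧
    MeasureTheory.IntegrableOn
      (fun ρ : ℝ => (((ρ : ℂ) * Complex.exp ((θ₀ : ℂ) * Complex.I)) ^ z) • Rm ρ)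
      (Set.Ioi 0) volume ∧
    ‖(1 / (2 * (Real.pi : ℂ) * Complex.I)) •
        (Complex.exp (((Real.pi - θ₀ : ℝ) : ℂ) * Complex.I) •
            (∫ ρ in Set.Ioi (0 : ℝ),
              (((ρ : ℂ) * Complex.exp (-(θ₀ : ℂ) * Complex.I)) ^ z) • Rp ρ) -
          Complex.exp (-((Real.pi - θ₀ : ℝ) : ℂ) * Complex.I) •
            (∫ ρ in Set.Ioi (0 : ℝ),
              (((ρ : ℂ) * Complex.exp ((θ₀ : ℂ) * Complex.I)) ^ z) • Rm ρ))‖ ≤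
      (Real.exp (|z.im| * θ₀) / Real.pi) *
        (2 ^ α * κ ^ α * (2 * κ) ^ (-(α + z.re)) / (α + z.re) +
          κ * (2 * κ) ^ (-z.re) / (-z.re)) := by
  have hπ := Real.pi_pos
  have hθ₀_lt : |θ₀| < Real.pi := by rw [abs_of_pos hθ₀.1]; linarith [hθ₀.2]
  have hnegθ₀_lt : |-θ₀| < Real.pi := by rwa [abs_neg]
  have hc : 0 < 1 / (2 * κ) := by positivity
  have hpow (s : ℝ) : (1 / (2 * κ)) ^ s = (2 * κ) ^ (-s) := by
    rw [Real.rpow_neg (by positivity), one_div, Real.inv_rpow (by positivity)]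
  have hRp₁' (ρ : ℝ) (hρ : 1 / (2 * κ) < ρ) := hRp₁ ρ (hc.trans hρ)
  have hRm₁' (ρ : ℝ) (hρ : 1 / (2 * κ) < ρ) := hRm₁ ρ (hc.trans hρ)
  have hIp := integrableOn_ofReal_mul_exp_mul_I_cpow_smul hRpMeas hnegθ₀_lt hc hz₁ hz₂ hRp₂ hRp₁'
  have hNp :=
    norm_integral_ofReal_mul_exp_mul_I_cpow_smul_le hRpMeas hnegθ₀_lt hc hz₁ hz₂ hRp₂ hRp₁'
  have hNm := norm_integral_ofReal_mul_exp_mul_I_cpow_smul_le hRmMeas hθ₀_lt hc hz₁ hz₂ hRm₂ hRm₁'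
  simp only [Complex.ofReal_neg, abs_neg, abs_of_pos hθ₀.1, hpow] at hIp hNp hNm
  refine ⟨hIp,
    integrableOn_ofReal_mul_exp_mul_I_cpow_smul hRmMeas hθ₀_lt hc hz₁ hz₂ hRm₂ hRm₁', ?_⟩
  refine (norm_smul_sub_smul_le (by simp [Complex.norm_exp]) (by simp [Complex.norm_exp])
    _ _ _).trans ?_
  calc _ ≤ ‖1 / (2 * (Real.pi : ℂ) * Complex.I)‖ *
        (Real.exp (|z.im| * θ₀) * _ + Real.exp (|z.im| * θ₀) * _) :=
        mul_le_mul_of_nonneg_left (add_le_add hNp hNm) (norm_nonneg _)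
    _ = _ := by
        simp only [one_div, norm_inv, norm_mul, Complex.norm_ofNat, Complex.norm_real,
          Complex.norm_I, Real.norm_of_nonneg hπ.le, mul_one]
        field_simp
        ring

theorem stmt_5 {X : Type*} [NormedAddCommGroup X] [NormedSpace ℂ X] [CompleteSpace X]
    (θ₀ κ α : ℝ) (hθ₀ : θ₀ ∈ Set.Ioo 0 (Real.pi / 2)) (hκ : 0 < κ)
    (hα : α ∈ Set.Ioo (0 : ℝ) 1)
    (Rp Rm : ℝ → X →L[ℂ] X)
    (hRpMeas : AEStronglyMeasurable Rp (volume.restrict (Set.Ioi (0 : ℝ))))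
    (hRmMeas : AEStronglyMeasurable Rm (volume.restrict (Set.Ioi (0 : ℝ))))
    (hRp₁ : ∀ ρ : ℝ, 0 < ρ → ‖Rp ρ‖ ≤ κ / ρ)
    (hRm₁ : ∀ ρ : ℝ, 0 < ρ → ‖Rm ρ‖ ≤ κ / ρ)
    (hRp₂ : ∀ ρ : ℝ, 0 < ρ → ρ ≤ 1 / (2 * κ) → ‖Rp ρ‖ ≤ 2 ^ α * κ ^ α * ρ ^ (α - 1))
    (hRm₂ : ∀ ρ : ℝ, 0 < ρ → ρ ≤ 1 / (2 * κ) → ‖Rm ρ‖ ≤ 2 ^ α * κ ^ α * ρ ^ (α - 1))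
    (z : ℂ) (hz₁ : -α < z.re) (hz₂ : z.re < 0) :
    MeasureTheory.IntegrableOn
      (fun ρ : ℝ => (((ρ : ℂ) * Complex.exp (-(θ₀ : ℂ) * Complex.I)) ^ z) • Rp ρ)
      (Set.Ioi 0) volume ∧
    MeasureTheory.IntegrableOn
      (fun ρ : ℝ => (((ρ : ℂ) * Complex.exp ((θ₀ : ℂ) * Complex.I)) ^ z) • Rm ρ)
      (Set.Ioi 0) volume ∧
    ‖(1 / (2 * (Real.pi : ℂ) * Complex.I)) •
        (Complex.exp (((Real.pi - θ₀ : ℝ) : ℂ) * Complex.I) •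
            (∫ ρ in Set.Ioi (0 : ℝ),
              (((ρ : ℂ) * Complex.exp (-(θ₀ : ℂ) * Complex.I)) ^ z) • Rp ρ) -
          Complex.exp (-((Real.pi - θ₀ : ℝ) : ℂ) * Complex.I) •
            (∫ ρ in Set.Ioi (0 : ℝ),
              (((ρ : ℂ) * Complex.exp ((θ₀ : ℂ) * Complex.I)) ^ z) • Rm ρ))‖ ≤
      (Real.exp (|z.im| * θ₀) / Real.pi) *
        (2 ^ α * κ ^ α * (2 * κ) ^ (-(α + z.re)) / (α + z.re) +
          κ * (2 * κ) ^ (-z.re) / (-z.re)) :=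
  stmt_5_general θ₀ κ α hθ₀ hκ Rp Rm hRpMeas hRmMeas hRp₁ hRm₁ hRp₂ hRm₂ z hz₁ hz₂
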